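/- Let f = Σ_{ν∈ℤⁿ} a_ν ν ∈ ℂ[ℤⁿ] be finitely supported such that its associated Laurent polynomial f(z) = Σ_ν a_ν z^ν does not vanish at any point of the torus Tⁿ. Then (1/2)·⟨(log(r(f) r(f)*)) δ_0, δ_0⟩ = ∫_{Tⁿ} log |f(z)| dμ(z), where μ is the normalized Haar measure on Tⁿ; equivalently, the Fuglede–Kadison determinant det f = exp((1/2)⟨(log(r(f) r(f)*)) δ_0, δ_0⟩) equals the exponential of the logarithmic Mahler measure of f. -/

import Mathlib

open Filter MeasureTheory ComplexConjugate
open scoped ENNReal Real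

/-- The Hilbert space `ℓ²(ℤⁿ)` of square-summable complex valued functions on `ℤⁿ`. -/
abbrev l2Zn (n : ℕ) : Type _ := lp (fun _ : (Fin n → ℤ) => ℂ) 2

instance l2Zn.instCFCReal (n : ℕ) :
    ContinuousFunctionalCalculus ℝ (l2Zn n →L[ℂ] l2Zn n) IsSelfAdjoint :=
  IsSelfAdjoint.instContinuousFunctionalCalculus

/-!
In the basis `δ_j`, both `r(f)` and `r(f)*` act as Fourier multipliers on the torus, with
symbols `f` and `conj f`: the matrix coefficient `((r(f) r(f)*)ᵏ δ_j)(m)` is a Fourier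
coefficient of `|f|^{2k}`. By linearity and Weierstrass approximation, `(φ(r(f) r(f)*) δ_j)(m)`
is the same Fourier coefficient of `φ ∘ |f|²` for every `φ` continuous on an interval containing
the spectrum and the range of `|f|²`. Cut-off functions vanishing on `[min |f|², max |f|²]`
then vanish on the spectrum, which is therefore bounded away from `0` because `f` has no zero
on the torus. For `φ = log` and `j = m = 0` this gives
`⟨log (r(f) r(f)*) δ_0, δ_0⟩ = ∫ log |f|² = 2 ∫ log |f|`.
-/

noncomputable section

local notation "ℓ²(" G ")" => lp (fun _ : G => ℂ) 2

section ShiftOperators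

variable {G : Type*} [DecidableEq G]

theorem lp.inner_single_one_left (m : G) (x : ℓ²(G)) :
    inner ℂ (lp.single 2 m 1 : ℓ²(G)) x = x m := by
  simp [lp.inner_single_left]

theorem lp.norm_apply_single_one_le (B : ℓ²(G) →L[ℂ] ℓ²(G)) (j m : G) :
    ‖B (lp.single 2 j 1) m‖ ≤ ‖B‖ :=
  calc ‖B (lp.single 2 j 1) m‖
      ≤ ‖B (lp.single 2 j 1)‖ := lp.norm_apply_le_norm two_ne_zero _ _
    _ ≤ ‖B‖ * ‖(lp.single 2 j 1 : ℓ²(G))‖ := B.le_opNorm _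
    _ = ‖B‖ := by rw [lp.norm_single (by norm_num), norm_one, mul_one]

variable [AddCommGroup G]

theorem lp.single_one_apply_add (m j ν : G) :
    (lp.single 2 m 1 : ℓ²(G)) (j + ν) = (lp.single 2 (m - ν) 1 : ℓ²(G)) j := by
  simp only [lp.single_apply, Pi.single_apply, eq_sub_iff_add_eq]

theorem apply_single_of_apply_eq_sum_shift {T : ℓ²(G) →L[ℂ] ℓ²(G)}
    {S : Finset G} {c : G → ℂ} (hT : ∀ x m, T x m = ∑ ν ∈ S, c ν * x (m + ν)) (m : G) :
    T (lp.single 2 m 1) = ∑ ν ∈ S, c ν • (lp.single 2 (m - ν) 1 : ℓ²(G)) := by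
  ext j
  rw [hT, lp.coeFn_sum, Finset.sum_apply]
  refine Finset.sum_congr rfl fun ν _ => ?_
  rw [lp.coeFn_smul, Pi.smul_apply, lp.single_one_apply_add, smul_eq_mul]

theorem adjoint_apply_of_apply_eq_sum_shift {T : ℓ²(G) →L[ℂ] ℓ²(G)}
    {S : Finset G} {c : G → ℂ} (hT : ∀ x m, T x m = ∑ ν ∈ S, c ν * x (m + ν))
    (x : ℓ²(G)) (m : G) :
    T.adjoint x m = ∑ ν ∈ S, conj (c ν) * x (m + -ν) := by
  rw [← lp.inner_single_one_left, ContinuousLinearMap.adjoint_inner_right,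
    apply_single_of_apply_eq_sum_shift hT, sum_inner]
  simp [inner_smul_left, lp.inner_single_one_left, sub_eq_add_neg]

end ShiftOperators

section UnitCube

theorem setIntegral_Icc_pi_prod {ι 𝕜 : Type*} [Fintype ι] [RCLike 𝕜] (a b : ι → ℝ)
    (F : ι → ℝ → 𝕜) :
    ∫ u in Set.Icc a b, ∏ i, F i (u i) = ∏ i, ∫ t in Set.Icc (a i) (b i), F i t := by
  rw [← Set.pi_univ_Icc, volume_pi, Measure.restrict_pi_pi, integral_fintype_prod_eq_prod]

theorem norm_setIntegral_unitCube_le {ι E : Type*} [Fintype ι] [NormedAddCommGroup E]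
    [NormedSpace ℝ E] {h : (ι → ℝ) → E} {C : ℝ} (hC : ∀ u ∈ Set.Icc (0 : ι → ℝ) 1, ‖h u‖ ≤ C) :
    ‖∫ u in Set.Icc (0 : ι → ℝ) 1, h u‖ ≤ C := by
  have hvol : volume.real (Set.Icc (0 : ι → ℝ) 1) = 1 := by
    simp [measureReal_def, Real.volume_Icc_pi_toReal zero_le_one]
  simpa [hvol] using norm_setIntegral_le_of_norm_le_const (measure_Icc_lt_top (μ := volume)) hC

theorem setIntegral_Icc_exp_two_pi_I_int_mul (k : ℤ) :
    ∫ t in Set.Icc (0 : ℝ) 1, Complex.exp (2 * π * Complex.I * k * t) =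
      if k = 0 then 1 else 0 := by
  split_ifs with hk
  · simp [hk]
  have hc : (2 * π * Complex.I * k : ℂ) ≠ 0 := by simp [Real.pi_ne_zero, hk]
  rw [integral_Icc_eq_integral_Ioc, ← intervalIntegral.integral_of_le zero_le_one,
    integral_exp_mul_complex hc]
  have h1 : Complex.exp (2 * π * Complex.I * k) = 1 := by
    simpa [mul_comm, mul_left_comm, mul_assoc] using Complex.exp_int_mul_two_pi_mul_I k
  simp [h1]

end UnitCube

def torusChar {n : ℕ} (m : Fin n → ℤ) (u : Fin n → ℝ) : ℂ :=
  Complex.exp (2 * π * Complex.I * ∑ i, (m i : ℂ) * (u i : ℂ))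

namespace torusChar

variable {n : ℕ}

@[simp]
theorem zero_apply (u : Fin n → ℝ) : torusChar 0 u = 1 := by
  simp [torusChar]

theorem eq_prod_exp (m : Fin n → ℤ) (u : Fin n → ℝ) :
    torusChar m u = ∏ i, Complex.exp (2 * π * Complex.I * m i * u i) := by
  rw [torusChar, ← Complex.exp_sum, Finset.mul_sum]
  simp only [mul_assoc]

theorem eq_prod_pow (m : Fin n → ℤ) (u : Fin n → ℝ) :
    torusChar m u = ∏ i, Complex.exp (2 * π * Complex.I * u i) ^ m i := by
  rw [eq_prod_exp]
  refine Finset.prod_congr rfl fun i _ => ?_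
  rw [← Complex.exp_int_mul]
  ring_nf

theorem add_apply (m k : Fin n → ℤ) (u : Fin n → ℝ) :
    torusChar (m + k) u = torusChar m u * torusChar k u := by
  simp only [eq_prod_exp, ← Finset.prod_mul_distrib, ← Complex.exp_add]
  refine Finset.prod_congr rfl fun i _ => ?_
  push_cast [Pi.add_apply]
  ring_nf

theorem conj_apply (m : Fin n → ℤ) (u : Fin n → ℝ) :
    conj (torusChar m u) = torusChar (-m) u := by
  simp only [eq_prod_exp, map_prod, ← Complex.exp_conj]
  refine Finset.prod_congr rfl fun i _ => ?_
  simp [Complex.conj_ofNat]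

theorem norm_apply (m : Fin n → ℤ) (u : Fin n → ℝ) : ‖torusChar m u‖ = 1 := by
  simp [eq_prod_exp, Complex.norm_exp]

@[fun_prop]
theorem continuous (m : Fin n → ℤ) : Continuous (torusChar m) := by
  unfold torusChar
  fun_prop

theorem setIntegral_unitCube (m : Fin n → ℤ) :
    ∫ u in Set.Icc (0 : Fin n → ℝ) 1, torusChar m u = if m = 0 then 1 else 0 := by
  simp only [eq_prod_exp]
  rw [setIntegral_Icc_pi_prod (F := fun i t => Complex.exp (2 * π * Complex.I * m i * t))]
  simp only [Pi.zero_apply, Pi.one_apply, setIntegral_Icc_exp_two_pi_I_int_mul]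
  by_cases hm : m = 0
  · simp [hm]
  · obtain ⟨i, hi⟩ := Function.ne_iff.mp hm
    simp only [hm, if_false]
    exact Finset.prod_eq_zero (Finset.mem_univ i) (if_neg hi)

end torusChar

/-- `B` is the Laurent operator with symbol `h`: the matrix coefficient `(B δ_j)(m)` is the
Fourier coefficient of `h` at `j - m`. -/
def HasSymbol {n : ℕ} (B : l2Zn n →L[ℂ] l2Zn n) (h : (Fin n → ℝ) → ℂ) : Prop :=
  ∀ j m : Fin n → ℤ,
    B (lp.single 2 j 1) m = ∫ u in Set.Icc (0 : Fin n → ℝ) 1, h u * torusChar (m - j) u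

namespace HasSymbol

variable {n : ℕ} {B : l2Zn n →L[ℂ] l2Zn n} {h : (Fin n → ℝ) → ℂ}

theorem integrableOn_mul_torusChar (hh : ContinuousOn h (Set.Icc 0 1)) (k : Fin n → ℤ) :
    IntegrableOn (fun u => h u * torusChar k u) (Set.Icc 0 1) :=
  (hh.mul (torusChar.continuous k).continuousOn).integrableOn_compact isCompact_Icc

theorem one : HasSymbol (1 : l2Zn n →L[ℂ] l2Zn n) (fun _ => 1) := by
  intro j m
  simp only [one_mul, torusChar.setIntegral_unitCube, sub_eq_zero, one_apply_eq_self,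
    lp.single_apply, Pi.single_apply]

theorem smul (hB : HasSymbol B h) (r : ℝ) : HasSymbol (r • B) (fun u => r • h u) := by
  intro j m
  simp only [smul_apply, lp.coeFn_smul, Pi.smul_apply, hB j m, smul_mul_assoc, integral_smul]

theorem sum {ι : Type*} (s : Finset ι) {B : ι → l2Zn n →L[ℂ] l2Zn n}
    {h : ι → (Fin n → ℝ) → ℂ} (hB : ∀ i ∈ s, HasSymbol (B i) (h i))
    (hh : ∀ i ∈ s, ContinuousOn (h i) (Set.Icc 0 1)) :
    HasSymbol (∑ i ∈ s, B i) (fun u => ∑ i ∈ s, h i u) := by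
  intro j m
  simp only [sum_apply, lp.coeFn_sum, Finset.sum_apply, Finset.sum_mul]
  rw [integral_finsetSum _ fun i hi => integrableOn_mul_torusChar (hh i hi) _]
  exact Finset.sum_congr rfl fun i hi => hB i hi j m

theorem shift_mul {ι : Type*} {T : l2Zn n →L[ℂ] l2Zn n} {S : Finset ι} {c : ι → ℂ}
    {e : ι → Fin n → ℤ} (hT : ∀ x m, T x m = ∑ i ∈ S, c i * x (m + e i))
    (hB : HasSymbol B h) (hh : ContinuousOn h (Set.Icc 0 1)) :
    HasSymbol (T * B) (fun u => (∑ i ∈ S, c i * torusChar (e i) u) * h u) := by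
  intro j m
  have hchar (i : ι) (u : Fin n → ℝ) :
      torusChar (m + e i - j) u = torusChar (e i) u * torusChar (m - j) u := by
    rw [← torusChar.add_apply, add_sub_right_comm, add_comm]
  rw [mul_apply_eq_comp, hT]
  simp only [hB j, ← integral_const_mul, Finset.sum_mul]
  rw [← integral_finsetSum _ fun i _ => (integrableOn_mul_torusChar hh _).const_mul (c i)]
  refine setIntegral_congr_fun measurableSet_Icc fun u _ => Finset.sum_congr rfl fun i _ => ?_
  rw [hchar]
  ring

theorem eq_zero (hB : HasSymbol B 0) : B = 0 := by
  refine lp.ext_continuousLinearMap (by norm_num) fun j => ?_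
  refine ContinuousLinearMap.ext fun a => ?_
  have hj : B (lp.single 2 j 1) = 0 := by
    ext m
    simp [hB j m]
  rw [ContinuousLinearMap.comp_apply, lp.singleContinuousLinearMap_apply, ← mul_one a,
    ← smul_eq_mul, lp.single_smul, map_smul, hj, smul_zero, ContinuousLinearMap.zero_comp,
    zero_apply]

theorem of_forall_approx (hh : ContinuousOn h (Set.Icc 0 1))
    (happrox : ∀ ε > 0, ∃ B' h', HasSymbol B' h' ∧ ContinuousOn h' (Set.Icc 0 1) ∧
      ‖B - B'‖ ≤ ε ∧ ∀ u ∈ Set.Icc (0 : Fin n → ℝ) 1, ‖h' u - h u‖ ≤ ε) :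
    HasSymbol B h := by
  intro j m
  refine eq_of_forall_dist_le fun ε hε => ?_
  obtain ⟨B', h', hB', hh', hBB', hhh'⟩ := happrox (ε / 2) (by positivity)
  have hop : ‖B (lp.single 2 j 1) m - B' (lp.single 2 j 1) m‖ ≤ ε / 2 := by
    rw [← Pi.sub_apply, ← lp.coeFn_sub, ← sub_apply]
    exact (lp.norm_apply_single_one_le _ j m).trans hBB'
  have hint : ‖B' (lp.single 2 j 1) m -
      ∫ u in Set.Icc (0 : Fin n → ℝ) 1, h u * torusChar (m - j) u‖ ≤ ε / 2 := by
    rw [hB' j m,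
      ← integral_sub (integrableOn_mul_torusChar hh' _) (integrableOn_mul_torusChar hh _)]
    refine norm_setIntegral_unitCube_le fun u hu => ?_
    rw [← sub_mul, norm_mul, torusChar.norm_apply, mul_one]
    exact hhh' u hu
  rw [dist_eq_norm, ← sub_add_sub_cancel _ (B' (lp.single 2 j 1) m)]
  linarith [norm_add_le (B (lp.single 2 j 1) m - B' (lp.single 2 j 1) m)
    (B' (lp.single 2 j 1) m - ∫ u in Set.Icc (0 : Fin n → ℝ) 1, h u * torusChar (m - j) u)]

end HasSymbol

section LaurentPolynomial

variable {n : ℕ}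

/-- The Laurent polynomial `f(z) = ∑ a_ν z^ν` on the torus, in the coordinates
`z_j = exp (2πi u_j)`. -/
def laurentSymbol (f : (Fin n → ℤ) →₀ ℂ) (u : Fin n → ℝ) : ℂ :=
  ∑ ν ∈ f.support, f ν * torusChar ν u

@[fun_prop]
theorem continuous_laurentSymbol (f : (Fin n → ℤ) →₀ ℂ) : Continuous (laurentSymbol f) := by
  unfold laurentSymbol
  fun_prop

theorem laurentSymbol_ne_zero {f : (Fin n → ℤ) →₀ ℂ}
    (hf : ∀ z : Fin n → ℂ, (∀ i, ‖z i‖ = 1) → (∑ ν ∈ f.support, f ν * ∏ i, z i ^ (ν i)) ≠ 0)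
    (u : Fin n → ℝ) : laurentSymbol f u ≠ 0 := by
  simpa only [laurentSymbol, torusChar.eq_prod_pow] using
    hf (fun i => Complex.exp (2 * π * Complex.I * u i)) fun i => by simp [Complex.norm_exp]

theorem hasSymbol_mul_adjoint_pow {f : (Fin n → ℤ) →₀ ℂ} {R : l2Zn n →L[ℂ] l2Zn n}
    (hR : ∀ x m, R x m = ∑ ν ∈ f.support, f ν * x (m + ν)) (k : ℕ) :
    HasSymbol ((R * R.adjoint) ^ k) (fun u => ((‖laurentSymbol f u‖ ^ 2 : ℝ) : ℂ) ^ k) := by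
  induction k with
  | zero => simpa only [pow_zero] using HasSymbol.one
  | succ k ih =>
    rw [pow_succ', mul_assoc]
    convert HasSymbol.shift_mul hR (HasSymbol.shift_mul
      (adjoint_apply_of_apply_eq_sum_shift hR) ih (by fun_prop)) (by fun_prop) using 2 with u
    have hconj :
        ∑ ν ∈ f.support, conj (f ν) * torusChar (-ν) u = conj (laurentSymbol f u) := by
      simp only [laurentSymbol, map_sum, map_mul, torusChar.conj_apply]
    rw [hconj, ← mul_assoc, ← laurentSymbol, Complex.mul_conj, Complex.normSq_eq_norm_sq,
      pow_succ']

end LaurentPolynomial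

section FunctionalCalculus

variable {n : ℕ} {A : l2Zn n →L[ℂ] l2Zn n} {g : (Fin n → ℝ) → ℝ}

theorem hasSymbol_aeval (hpow : ∀ k : ℕ, HasSymbol (A ^ k) (fun u => (g u : ℂ) ^ k))
    (hg : Continuous g) (p : Polynomial ℝ) :
    HasSymbol (Polynomial.aeval A p) (fun u => ((p.eval (g u) : ℝ) : ℂ)) := by
  rw [Polynomial.aeval_eq_sum_range]
  convert HasSymbol.sum _ (fun k _ => (hpow k).smul (p.coeff k)) (fun k _ => by fun_prop)
    using 2 with u
  simp [Polynomial.eval_eq_sum_range]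

theorem hasSymbol_cfc (hA : IsSelfAdjoint A)
    (hpow : ∀ k : ℕ, HasSymbol (A ^ k) (fun u => (g u : ℂ) ^ k)) (hg : Continuous g) {a b : ℝ}
    (hspec : spectrum ℝ A ⊆ Set.Icc a b) (hgab : Set.MapsTo g (Set.Icc 0 1) (Set.Icc a b))
    {φ : ℝ → ℝ} (hφ : ContinuousOn φ (Set.Icc a b)) :
    HasSymbol (cfc φ A) (fun u => (φ (g u) : ℂ)) := by
  have hφg : ContinuousOn (fun u => (φ (g u) : ℂ)) (Set.Icc 0 1) :=
    Complex.continuous_ofReal.comp_continuousOn (hφ.comp hg.continuousOn hgab)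
  refine HasSymbol.of_forall_approx hφg fun ε hε => ?_
  obtain ⟨p, hp⟩ := exists_polynomial_near_of_continuousOn a b φ hφ ε hε
  refine ⟨_, _, hasSymbol_aeval hpow hg p, by fun_prop, ?_, fun u hu => ?_⟩
  · rw [← cfc_polynomial p A, ← cfc_sub φ _ A (hφ.mono hspec)]
    refine norm_cfc_le hε.le fun x hx => ?_
    rw [Real.norm_eq_abs, abs_sub_comm]
    exact (hp x (hspec hx)).le
  · rw [← Complex.ofReal_sub, Complex.norm_real, Real.norm_eq_abs]
    exact (hp _ (hgab hu)).le

theorem eqOn_zero_spectrum_of_hasSymbol (hA : IsSelfAdjoint A)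
    (hpow : ∀ k : ℕ, HasSymbol (A ^ k) (fun u => (g u : ℂ) ^ k)) (hg : Continuous g) {a b : ℝ}
    (hspec : spectrum ℝ A ⊆ Set.Icc a b) (hgab : Set.MapsTo g (Set.Icc 0 1) (Set.Icc a b))
    {φ : ℝ → ℝ} (hφ : ContinuousOn φ (Set.Icc a b))
    (hφg : ∀ u ∈ Set.Icc (0 : Fin n → ℝ) 1, φ (g u) = 0) :
    (spectrum ℝ A).EqOn φ 0 := by
  have hφA : cfc φ A = 0 := by
    refine HasSymbol.eq_zero fun j m => ?_
    rw [hasSymbol_cfc hA hpow hg hspec hgab hφ j m]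
    simp only [Pi.zero_apply, zero_mul, integral_zero]
    exact setIntegral_eq_zero_of_forall_eq_zero fun u hu => by simp [hφg u hu]
  exact eqOn_of_cfc_eq_cfc ((cfc_zero ℝ A).symm ▸ hφA) (hφ.mono hspec)

theorem spectrum_subset_Icc_of_hasSymbol (hA : IsSelfAdjoint A)
    (hpow : ∀ k : ℕ, HasSymbol (A ^ k) (fun u => (g u : ℂ) ^ k)) (hg : Continuous g) {a b : ℝ}
    (hgab : Set.MapsTo g (Set.Icc 0 1) (Set.Icc a b)) :
    spectrum ℝ A ⊆ Set.Icc a b := by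
  obtain ⟨L, hL⟩ := ((spectrum.isCompact (𝕜 := ℝ) A).union
    (isCompact_Icc (a := a) (b := b))).isBounded.subset_closedBall 0
  rw [Real.closedBall_eq_Icc, zero_sub, zero_add] at hL
  have hspecL : spectrum ℝ A ⊆ Set.Icc (-L) L := Set.subset_union_left.trans hL
  have hgL : Set.MapsTo g (Set.Icc 0 1) (Set.Icc (-L) L) :=
    hgab.mono_right (Set.subset_union_right.trans hL)
  intro s hs
  have hlow := eqOn_zero_spectrum_of_hasSymbol hA hpow hg hspecL hgL
    (φ := fun x => max 0 (a - x)) (by fun_prop)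
    (fun u hu => max_eq_left (by linarith [(hgab hu).1])) hs
  have hup := eqOn_zero_spectrum_of_hasSymbol hA hpow hg hspecL hgL
    (φ := fun x => max 0 (x - b)) (by fun_prop)
    (fun u hu => max_eq_left (by linarith [(hgab hu).2])) hs
  simp only [Pi.zero_apply, max_eq_left_iff, sub_nonpos] at hlow hup
  exact ⟨hlow, hup⟩

end FunctionalCalculus

end

/-- **Equation (1) of the paper** (Lück, Example 3.13): if the Laurent polynomial
`f(z) = ∑_ν a_ν z^ν` of a finitely supported `f ∈ ℂ[ℤⁿ]` does not vanish on the torus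
`Tⁿ`, then `log det_{NΓ} f = (1/2)⟨(log (r(f) r(f)^*)) δ_0, δ_0⟩` equals the logarithmic
Mahler measure `∫_{Tⁿ} log |f(z)| dμ(z)`, the torus being parametrized by
`z_j = exp(2πi t_j)`, `t ∈ [0,1]ⁿ`, with `μ` the normalized Haar measure. -/
theorem FK_determinant_eq_mahler_measure (n : ℕ) (f : (Fin n → ℤ) →₀ ℂ)
    (hf : ∀ z : Fin n → ℂ, (∀ i, ‖z i‖ = 1) →
      (∑ ν ∈ f.support, f ν * ∏ i, z i ^ (ν i)) ≠ 0)
    (R : l2Zn n →L[ℂ] l2Zn n)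
    (hR : ∀ (x : l2Zn n) (m : Fin n → ℤ), R x m = ∑ ν ∈ f.support, f ν * x (m + ν)) :
    ∃ t : ℝ,
      (t : ℂ) = (cfc Real.log (R * ContinuousLinearMap.adjoint R))
          (lp.single 2 (0 : Fin n → ℤ) 1) (0 : Fin n → ℤ) ∧
      t / 2 = ∫ u in Set.Icc (0 : Fin n → ℝ) 1,
        Real.log ‖∑ ν ∈ f.support,
          f ν * Complex.exp (2 * π * Complex.I * ∑ i, (ν i : ℂ) * (u i : ℂ))‖ := by
  set A := R * ContinuousLinearMap.adjoint R
  set g : (Fin n → ℝ) → ℝ := fun u => ‖laurentSymbol f u‖ ^ 2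
  have hA : IsSelfAdjoint A := by
    simpa only [A, ← ContinuousLinearMap.star_eq_adjoint] using IsSelfAdjoint.mul_star_self R
  have hpow : ∀ k : ℕ, HasSymbol (A ^ k) (fun u => (g u : ℂ) ^ k) := hasSymbol_mul_adjoint_pow hR
  have hg : Continuous g := by fun_prop
  obtain ⟨u₀, -, hu₀⟩ := isCompact_Icc.exists_isMinOn (Set.nonempty_Icc.2 zero_le_one)
    hg.continuousOn
  obtain ⟨u₁, -, hu₁⟩ := isCompact_Icc.exists_isMaxOn (Set.nonempty_Icc.2 zero_le_one)
    hg.continuousOn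
  have hgab : Set.MapsTo g (Set.Icc 0 1) (Set.Icc (g u₀) (g u₁)) := fun u hu => ⟨hu₀ hu, hu₁ hu⟩
  have hg₀ : 0 < g u₀ := pow_pos (norm_pos_iff.2 (laurentSymbol_ne_zero hf u₀)) 2
  have hlog := hasSymbol_cfc hA hpow hg (spectrum_subset_Icc_of_hasSymbol hA hpow hg hgab) hgab
    (Real.continuousOn_log.mono fun x hx => (hg₀.trans_le hx.1).ne')
  refine ⟨∫ u in Set.Icc (0 : Fin n → ℝ) 1, Real.log (g u), ?_, ?_⟩
  · rw [hlog 0 0]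
    simp only [sub_self, torusChar.zero_apply, mul_one]
    exact integral_complex_ofReal.symm
  · change _ = ∫ u in Set.Icc (0 : Fin n → ℝ) 1, Real.log ‖laurentSymbol f u‖
    simp only [g, Real.log_pow, integral_const_mul]
    push_cast
    ring
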